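/- arXiv:1501.07353 — 2 statements merged into one kernel-verified Lean document; each statement's English description precedes it below -/
import Mathlib

section
/- Suppose 𝔄 = {A_n}_{n≥1} is admissible, f : ω × ω → ω is associative (so (ω, f) is a semigroup), and f is an 𝔄-operation. Then the operation f_*^𝔄 on the set β𝔄 of 𝔄-ultrafilters is associative, i.e., (β𝔄, f_*^𝔄) is a semigroup. -/
/-- A field of sets over `S`: a nonempty collection of subsets of `S` closed under
finite unions, finite intersections and complementation. -/
def IsFieldOfSets {S : Type*} (A : Set (Set S)) : Prop :=
  A.Nonempty ∧ (∀ X ∈ A, ∀ Y ∈ A, X ∪ Y ∈ A) ∧ (∀ X ∈ A, ∀ Y ∈ A, X ∩ Y ∈ A) ∧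
    ∀ X ∈ A, Xᶜ ∈ A

/-- `U` is an ultrafilter on the field of sets `A`. -/
def IsUltraOn {S : Type*} (A U : Set (Set S)) : Prop :=
  U ⊆ A ∧ (∀ X ∈ U, ∀ Y ∈ U, X ∩ Y ∈ U) ∧ Set.univ ∈ U ∧ ∅ ∉ U ∧
    ∀ X ∈ A, X ∈ U ∨ Xᶜ ∈ U

/-- An admissible family `𝔄 = {A_n}_{n ≥ 1}` of fields of sets over `ω^n`:
each `A (n+1)` is a field of sets over `Fin (n+1) → ℕ`, the family is closed under
cyclic shifts `(a₁,…,aₙ) ↦ (a₂,…,aₙ,a₁)` of coordinates, and under slices obtained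
by fixing the first coordinate.  (The value `A 0` is irrelevant.) -/
def Adm (A : ∀ n : ℕ, Set (Set (Fin n → ℕ))) : Prop :=
  (∀ n : ℕ, IsFieldOfSets (A (n + 1))) ∧
  (∀ n : ℕ, ∀ X ∈ A (n + 2),
      (fun a : Fin (n + 2) → ℕ => Fin.snoc (Fin.tail a) (a 0)) '' X ∈ A (n + 2)) ∧
  (∀ n : ℕ, ∀ X ∈ A (n + 2), ∀ c : ℕ,
      {t : Fin (n + 1) → ℕ | (Fin.cons c t : Fin (n + 2) → ℕ) ∈ X} ∈ A (n + 1))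

/-- `U` is an `𝔄`-ultrafilter: an ultrafilter on `A 1` satisfying the Fubini property:
for every `n ≥ 1` and `X ∈ A (n+1)`,
`{(a₁,…,aₙ) : {a_{n+1} : (a₁,…,a_{n+1}) ∈ X} ∈ U} ∈ A n`. -/
def IsAUltra (A : ∀ n : ℕ, Set (Set (Fin n → ℕ))) (U : Set (Set (Fin 1 → ℕ))) : Prop :=
  IsUltraOn (A 1) U ∧
  ∀ n : ℕ, ∀ X ∈ A (n + 2),
    {a : Fin (n + 1) → ℕ |
      {t : Fin 1 → ℕ | (Fin.snoc a (t 0) : Fin (n + 2) → ℕ) ∈ X} ∈ U} ∈ A (n + 1)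

/-- `f` is an (`m`-ary) `𝔄`-operation: for every `n ≥ 1` and `X ∈ A n`, the set
`{(a₁,…,a_{n+m-1}) : (a₁,…,a_{n-1}, f(a_n,…,a_{n+m-1})) ∈ X}` belongs to `A (n+m-1)`. -/
def IsAOp (A : ∀ n : ℕ, Set (Set (Fin n → ℕ))) {m : ℕ} (f : (Fin m → ℕ) → ℕ) : Prop :=
  ∀ p : ℕ, ∀ X ∈ A (p + 1),
    {b : Fin (p + m) → ℕ |
      (Fin.snoc (fun i : Fin p => b (Fin.castAdd m i))
          (f (fun j : Fin m => b (Fin.natAdd p j))) : Fin (p + 1) → ℕ) ∈ X}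
      ∈ A (p + m)


/-- The Fubini product ultrafilter `U ⊗ V` on `A 2`:
`U ⊗ V = {Y ∈ A 2 : {a : {b : (a,b) ∈ Y} ∈ V} ∈ U}`. -/
def otimes2 (A : ∀ n : ℕ, Set (Set (Fin n → ℕ))) (U V : Set (Set (Fin 1 → ℕ))) :
    Set (Set (Fin 2 → ℕ)) :=
  {Y ∈ A 2 | {a : Fin 1 → ℕ |
      {b : Fin 1 → ℕ | (Fin.snoc a (b 0) : Fin 2 → ℕ) ∈ Y} ∈ V} ∈ U}

/-- For a binary operation `f` on `ω`, `f_*^𝔄(U,V) = {X ∈ A 1 : f⁻¹[X] ∈ U ⊗ V}`. -/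
def fStar2 (A : ∀ n : ℕ, Set (Set (Fin n → ℕ))) (f : ℕ → ℕ → ℕ)
    (U V : Set (Set (Fin 1 → ℕ))) : Set (Set (Fin 1 → ℕ)) :=
  {X ∈ A 1 | {x : Fin 2 → ℕ | (fun _ : Fin 1 => f (x 0) (x 1)) ∈ X} ∈ otimes2 A U V}

/-!
`X ∈ f_*(U,V)` says exactly that `leftLarge f V X = {a : {b : f(a,b) ∈ X} ∈ V}` belongs to `U`.
Since `V` is an ultrafilter, `leftLarge f V` commutes with intersections and complements on `A 1`,
so `f_*(U,V)` is the pullback of the ultrafilter `U` along it. Its Fubini property is inherited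
from those of `U` and `V` once the last two coordinates are merged by `f`, which the
`𝔄`-operation property allows. Associativity of `f` gives
`leftLarge f (f_*(V,W)) X = leftLarge f V (leftLarge f W X)`, which is associativity of `f_*`.
-/
section FieldOfSets

variable {S T : Type*} {A : Set (Set S)} {U : Set (Set S)}

lemma IsFieldOfSets.univ_mem (hA : IsFieldOfSets A) : Set.univ ∈ A := by
  obtain ⟨⟨X, hX⟩, hunion, -, hcompl⟩ := hA
  simpa using hunion X hX Xᶜ (hcompl X hX)

lemma IsUltraOn.mem_of_subset (hU : IsUltraOn A U) {X Y : Set S} (hX : X ∈ U) (hY : Y ∈ A)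
    (hXY : X ⊆ Y) : Y ∈ U := by
  refine (hU.2.2.2.2 Y hY).resolve_right fun hYc => hU.2.2.2.1 ?_
  simpa [Set.disjoint_compl_right_iff_subset.mpr hXY |>.inter_eq] using hU.2.1 X hX Yᶜ hYc

lemma IsUltraOn.inter_mem_iff (hU : IsUltraOn A U) {X Y : Set S} (hX : X ∈ A) (hY : Y ∈ A) :
    X ∩ Y ∈ U ↔ X ∈ U ∧ Y ∈ U :=
  ⟨fun h => ⟨hU.mem_of_subset h hX Set.inter_subset_left,
      hU.mem_of_subset h hY Set.inter_subset_right⟩,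
    fun h => hU.2.1 X h.1 Y h.2⟩

lemma IsUltraOn.compl_mem_iff (hU : IsUltraOn A U) {X : Set S} (hX : X ∈ A) :
    Xᶜ ∈ U ↔ X ∉ U := by
  refine ⟨fun hXc hXU => hU.2.2.2.1 ?_, (hU.2.2.2.2 X hX).resolve_left⟩
  simpa using hU.2.1 X hXU Xᶜ hXc

lemma IsUltraOn.comap {B : Set (Set T)} (hB : IsFieldOfSets B) (hU : IsUltraOn A U)
    (φ : Set T → Set S) (hφ : ∀ X ∈ B, φ X ∈ A)
    (hφ_inter : ∀ X ∈ B, ∀ Y ∈ B, φ (X ∩ Y) = φ X ∩ φ Y)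
    (hφ_compl : ∀ X ∈ B, φ Xᶜ = (φ X)ᶜ) (hφ_univ : φ Set.univ = Set.univ) :
    IsUltraOn B {X ∈ B | φ X ∈ U} := by
  have huniv := hB.univ_mem
  refine ⟨fun X hX => hX.1, ?_, ⟨huniv, hφ_univ ▸ hU.2.2.1⟩, ?_, ?_⟩
  · rintro X ⟨hXB, hXU⟩ Y ⟨hYB, hYU⟩
    exact ⟨hB.2.2.1 X hXB Y hYB, hφ_inter X hXB Y hYB ▸ hU.2.1 _ hXU _ hYU⟩
  · rintro ⟨-, hempty⟩
    rw [← Set.compl_univ, hφ_compl _ huniv, hφ_univ, Set.compl_univ] at hempty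
    exact hU.2.2.2.1 hempty
  · intro X hX
    rw [Set.mem_ofPred_eq, Set.mem_ofPred_eq, hφ_compl X hX, hU.compl_mem_iff (hφ X hX)]
    exact (em _).imp (⟨hX, ·⟩) (⟨hB.2.2.2 X hX, ·⟩)

end FieldOfSets

section AUltrafilter

variable {A : ∀ n : ℕ, Set (Set (Fin n → ℕ))} {f : ℕ → ℕ → ℕ} {U V W : Set (Set (Fin 1 → ℕ))}

lemma Adm.slice_mem (hA : Adm A) {n : ℕ} {X : Set (Fin (n + 1) → ℕ)} (hX : X ∈ A (n + 1))
    (a : Fin n → ℕ) : {t : Fin 1 → ℕ | (Fin.snoc a (t 0) : Fin (n + 1) → ℕ) ∈ X} ∈ A 1 := by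
  induction n with
  | zero =>
    convert hX using 1
    ext t
    rw [Set.mem_ofPred_eq, Fin.snoc_zero]
    exact iff_of_eq (congrArg (· ∈ X) (funext fun i : Fin 1 => congrArg t (Subsingleton.elim _ _)))
  | succ n ih =>
    convert ih (hA.2.2 n X hX (a 0)) (Fin.tail a) using 3 with t
    rw [Set.mem_ofPred_eq, Fin.cons_snoc_eq_snoc_cons, Fin.cons_self_tail]

lemma IsAOp.exists_snoc_snoc_mem_iff (hf : IsAOp A (fun x : Fin 2 → ℕ => f (x 0) (x 1)))
    {n : ℕ} {X : Set (Fin (n + 1) → ℕ)} (hX : X ∈ A (n + 1)) :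
    ∃ Y ∈ A (n + 2), ∀ (a : Fin n → ℕ) (x y : ℕ),
      (Fin.snoc (Fin.snoc a x : Fin (n + 1) → ℕ) y : Fin (n + 2) → ℕ) ∈ Y ↔
        (Fin.snoc a (f x y) : Fin (n + 1) → ℕ) ∈ X := by
  refine ⟨_, hf n X hX, fun a x y => ?_⟩
  have hinit : (fun i : Fin n => (Fin.snoc (Fin.snoc a x : Fin (n + 1) → ℕ) y : Fin (n + 2) → ℕ)
      (Fin.castAdd 2 i)) = a := funext fun i => by
    simp [show (Fin.castAdd 2 i : Fin (n + 2)) = i.castSucc.castSucc from rfl]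
  have h0 : (Fin.natAdd n (0 : Fin 2) : Fin (n + 2)) = (Fin.last n).castSucc := Fin.ext (by simp)
  have h1 : (Fin.natAdd n (1 : Fin 2) : Fin (n + 2)) = Fin.last (n + 1) := Fin.ext (by simp)
  simp only [Set.mem_ofPred_eq, hinit, h0, h1, Fin.snoc_castSucc, Fin.snoc_last]

def leftPreimage (f : ℕ → ℕ → ℕ) (a : Fin 1 → ℕ) (X : Set (Fin 1 → ℕ)) : Set (Fin 1 → ℕ) :=
  {t | (fun _ : Fin 1 => f (a 0) (t 0)) ∈ X}

def leftLarge (f : ℕ → ℕ → ℕ) (V : Set (Set (Fin 1 → ℕ))) (X : Set (Fin 1 → ℕ)) :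
    Set (Fin 1 → ℕ) :=
  {a | leftPreimage f a X ∈ V}

lemma IsAOp.preimage_mem (hf : IsAOp A (fun x : Fin 2 → ℕ => f (x 0) (x 1)))
    {X : Set (Fin 1 → ℕ)} (hX : X ∈ A 1) :
    {x : Fin 2 → ℕ | (fun _ : Fin 1 => f (x 0) (x 1)) ∈ X} ∈ A 2 := by
  convert hf 0 X hX using 1
  ext x
  exact iff_of_eq (congrArg (· ∈ X) (funext fun i : Fin 1 => by rw [Fin.fin_one_eq_zero i]; rfl))

lemma mem_fStar2_iff (hf : IsAOp A (fun x : Fin 2 → ℕ => f (x 0) (x 1)))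
    {X : Set (Fin 1 → ℕ)} : X ∈ fStar2 A f U V ↔ X ∈ A 1 ∧ leftLarge f V X ∈ U :=
  ⟨fun h => ⟨h.1, h.2.2⟩, fun h => ⟨h.1, hf.preimage_mem h.1, h.2⟩⟩

lemma leftPreimage_mem (hA : Adm A) (hf : IsAOp A (fun x : Fin 2 → ℕ => f (x 0) (x 1)))
    {X : Set (Fin 1 → ℕ)} (hX : X ∈ A 1) (a : Fin 1 → ℕ) : leftPreimage f a X ∈ A 1 :=
  hA.slice_mem (hf.preimage_mem hX) a

lemma IsAUltra.leftLarge_mem (hV : IsAUltra A V)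
    (hf : IsAOp A (fun x : Fin 2 → ℕ => f (x 0) (x 1))) {X : Set (Fin 1 → ℕ)} (hX : X ∈ A 1) :
    leftLarge f V X ∈ A 1 :=
  hV.2 0 _ (hf.preimage_mem hX)

lemma leftLarge_inter (hA : Adm A) (hf : IsAOp A (fun x : Fin 2 → ℕ => f (x 0) (x 1)))
    (hV : IsUltraOn (A 1) V) {X Y : Set (Fin 1 → ℕ)} (hX : X ∈ A 1)
    (hY : Y ∈ A 1) : leftLarge f V (X ∩ Y) = leftLarge f V X ∩ leftLarge f V Y := by
  ext a
  exact hV.inter_mem_iff (leftPreimage_mem hA hf hX a) (leftPreimage_mem hA hf hY a)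

lemma leftLarge_compl (hA : Adm A) (hf : IsAOp A (fun x : Fin 2 → ℕ => f (x 0) (x 1)))
    (hV : IsUltraOn (A 1) V) {X : Set (Fin 1 → ℕ)} (hX : X ∈ A 1) :
    leftLarge f V Xᶜ = (leftLarge f V X)ᶜ := by
  ext a
  exact hV.compl_mem_iff (leftPreimage_mem hA hf hX a)

lemma IsAUltra.fStar2_isUltraOn (hA : Adm A) (hf : IsAOp A (fun x : Fin 2 → ℕ => f (x 0) (x 1)))
    (hU : IsAUltra A U) (hV : IsAUltra A V) :
    IsUltraOn (A 1) (fStar2 A f U V) := by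
  have hfStar : fStar2 A f U V = {X ∈ A 1 | leftLarge f V X ∈ U} :=
    Set.ext fun _ => mem_fStar2_iff hf
  rw [hfStar]
  exact hU.1.comap (hA.1 0) (leftLarge f V) (fun _ => hV.leftLarge_mem hf)
    (fun _ hX _ hY => leftLarge_inter hA hf hV.1 hX hY) (fun _ => leftLarge_compl hA hf hV.1)
    (Set.eq_univ_of_forall fun _ => hV.1.2.2.1)

lemma IsAUltra.fStar2_fubini (hA : Adm A) (hf : IsAOp A (fun x : Fin 2 → ℕ => f (x 0) (x 1)))
    (hU : IsAUltra A U) (hV : IsAUltra A V) (n : ℕ) {X : Set (Fin (n + 2) → ℕ)}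
    (hX : X ∈ A (n + 2)) :
    {a : Fin (n + 1) → ℕ |
      {t : Fin 1 → ℕ | (Fin.snoc a (t 0) : Fin (n + 2) → ℕ) ∈ X} ∈ fStar2 A f U V}
      ∈ A (n + 1) := by
  obtain ⟨Y, hY, hYX⟩ := hf.exists_snoc_snoc_mem_iff hX
  convert hU.2 n _ (hV.2 (n + 1) Y hY) using 1
  ext a
  rw [Set.mem_ofPred_eq, mem_fStar2_iff hf, and_iff_right (hA.slice_mem hX a)]
  suffices leftLarge f V {t | (Fin.snoc a (t 0) : Fin (n + 2) → ℕ) ∈ X} =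
      {s | {t : Fin 1 → ℕ | Fin.snoc (Fin.snoc a (s 0) : Fin (n + 2) → ℕ) (t 0) ∈ Y} ∈ V} by
    rw [this]; rfl
  ext s
  simp only [leftLarge, leftPreimage, Set.mem_ofPred_eq, hYX]

lemma leftLarge_leftPreimage (hassoc : ∀ a b c : ℕ, f (f a b) c = f a (f b c))
    (a : Fin 1 → ℕ) (X : Set (Fin 1 → ℕ)) :
    leftLarge f W (leftPreimage f a X) = leftPreimage f a (leftLarge f W X) := by
  ext s
  simp only [leftLarge, leftPreimage, Set.mem_ofPred_eq, hassoc]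

lemma leftLarge_fStar2 (hA : Adm A) (hf : IsAOp A (fun x : Fin 2 → ℕ => f (x 0) (x 1)))
    (hassoc : ∀ a b c : ℕ, f (f a b) c = f a (f b c)) {X : Set (Fin 1 → ℕ)} (hX : X ∈ A 1) :
    leftLarge f (fStar2 A f V W) X = leftLarge f V (leftLarge f W X) := by
  ext a
  rw [leftLarge, Set.mem_ofPred_eq, mem_fStar2_iff hf,
    and_iff_right (leftPreimage_mem hA hf hX a), leftLarge_leftPreimage hassoc]
  rfl

lemma fStar2_assoc (hA : Adm A) (hf : IsAOp A (fun x : Fin 2 → ℕ => f (x 0) (x 1)))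
    (hassoc : ∀ a b c : ℕ, f (f a b) c = f a (f b c)) (hW : IsAUltra A W) :
    fStar2 A f (fStar2 A f U V) W = fStar2 A f U (fStar2 A f V W) := by
  ext X
  simp only [mem_fStar2_iff hf]
  exact and_congr_right fun hX => by
    rw [and_iff_right (hW.leftLarge_mem hf hX), leftLarge_fStar2 hA hf hassoc hX]

end AUltrafilter

/-- If `(ω, f)` is a semigroup and `f` is an `𝔄`-operation, then `(β𝔄, f_*^𝔄)` is a
semigroup: `f_*^𝔄` maps `𝔄`-ultrafilters to `𝔄`-ultrafilters and is associative. -/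
theorem stmt9 (A : ∀ n : ℕ, Set (Set (Fin n → ℕ))) (hA : Adm A)
    (f : ℕ → ℕ → ℕ) (hassoc : ∀ a b c : ℕ, f (f a b) c = f a (f b c))
    (hf : IsAOp A (fun x : Fin 2 → ℕ => f (x 0) (x 1))) :
    (∀ U V : Set (Set (Fin 1 → ℕ)), IsAUltra A U → IsAUltra A V →
      IsAUltra A (fStar2 A f U V)) ∧
    ∀ U V W : Set (Set (Fin 1 → ℕ)), IsAUltra A U → IsAUltra A V → IsAUltra A W →
      fStar2 A f (fStar2 A f U V) W = fStar2 A f U (fStar2 A f V W) :=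
  ⟨fun _ _ hU hV => ⟨hU.fStar2_isUltraOn hA hf hV, fun n _ hX => hU.fStar2_fubini hA hf hV n hX⟩,
    fun _ _ _ _ _ hW => fStar2_assoc hA hf hassoc hW⟩
end

section
/- Suppose (ω, F) is a Ramsey algebra and 𝒜 is a countable field of sets over ω. Then for every infinite sequence a in ω there exists b ≤_F a such that the collection {X ∈ 𝒜 : FR_F(b−n) ⊆ X for some n ∈ ω} is an ultrafilter on 𝒜. -/
/-- An operation on `ω` of arity `op.1`, represented as a function on lists
(its values on lists of length `op.1` are the relevant ones). -/
abbrev NatOp : Type := ℕ × (List ℕ → ℕ)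

/-- `toFun op` is `op` viewed as a genuine `op.1`-ary operation on `ω`. -/
def NatOp.toFun (op : NatOp) : (Fin op.1 → ℕ) → ℕ := fun x => op.2 (List.ofFn x)

/-- `applyOps [h₁,…,hₘ] l` splits `l` into consecutive blocks of lengths given by the
arities of the `hᵢ` and returns the list `[h₁(block₁), …, hₘ(blockₘ)]`. -/
def applyOps : List NatOp → List ℕ → List ℕ
  | [], _ => []
  | h :: hs, l => h.2 (l.take h.1) :: applyOps hs (l.drop h.1)

/-- The orderly terms over `F`: the smallest collection of operations on `ω` including
`F`, containing the (unary) identity, and closed under orderly composition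
`f(x̄₁,…,x̄ₙ) = g(h₁(x̄₁),…,hₙ(x̄ₙ))`. -/
inductive OrderlyTerm (F : Set NatOp) : NatOp → Prop where
  | base {op : NatOp} (h : op ∈ F) : OrderlyTerm F op
  | id : OrderlyTerm F (1, fun l => l.headI)
  | comp {g : NatOp} (hs : List NatOp) (hg : OrderlyTerm F g)
      (hhs : ∀ h ∈ hs, OrderlyTerm F h) (hlen : g.1 = hs.length) :
      OrderlyTerm F ((hs.map Prod.fst).sum, fun l => g.2 (applyOps hs l))

/-- `FRset F a`: the set of finite reductions of the infinite sequence `a` with respect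
to `F`, i.e. all values `f(a i₁, …, a iₘ)` of orderly terms `f` over `F` on finite
subsequences `a i₁, …, a iₘ` (with `i₁ < ⋯ < iₘ`) of `a`. -/
def FRset (F : Set NatOp) (a : ℕ → ℕ) : Set ℕ :=
  {z | ∃ op : NatOp, OrderlyTerm F op ∧
    ∃ l : List ℕ, l.Chain' (· < ·) ∧ l.length = op.1 ∧ op.2 (l.map a) = z}

/-- `b` is a reduction of `a` with respect to `F` (`b ≤_F a`): each `b n` is obtained by
applying an orderly term over `F` to a finite block of terms of `a`, the blocks being
disjoint, consecutive, and in increasing order of index. -/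
def IsReduction (F : Set NatOp) (b a : ℕ → ℕ) : Prop :=
  ∃ ops : ℕ → NatOp, ∃ idx : ℕ → List ℕ,
    (∀ n, OrderlyTerm F (ops n)) ∧
    (∀ n, (idx n).length = (ops n).1) ∧
    (∀ n, (idx n).Chain' (· < ·)) ∧
    (∀ n m : ℕ, n < m → ∀ x ∈ idx n, ∀ y ∈ idx m, x < y) ∧
    ∀ n, b n = (ops n).2 ((idx n).map a)

/-- `(ω, F)` is a Ramsey algebra: for every infinite sequence `a` and every `X ⊆ ω`
there is a reduction `b ≤_F a` with `FR_F(b) ⊆ X` or `FR_F(b) ∩ X = ∅`. -/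
def IsRamseyAlg (F : Set NatOp) : Prop :=
  ∀ (a : ℕ → ℕ) (X : Set ℕ), ∃ b : ℕ → ℕ, IsReduction F b a ∧
    (FRset F b ⊆ X ∨ Disjoint (FRset F b) X)

/-!
Enumerate `𝒜` as `X₀, X₁, …`. Starting from `a₀ = a`, let `aₖ₊₁` keep the first `k` terms of
`aₖ` and replace its tail `aₖ - k` by a reduction `cₖ` whose finite reductions lie inside `Xₖ`
or inside its complement. The terms stabilise, and the diagonal `b n = aₙ₊₁ n` is a reduction
of `a` whose tail `b - k` is a reduction of `cₖ`. Hence every `Xₖ` or its complement contains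
`FR(b - k)`, and since tails of `b` have nonempty, decreasing sets of finite reductions, the
sets containing some `FR(b - n)` form an ultrafilter on `𝒜`.
-/

def NatOp.id : NatOp := (1, fun l => l.headI)

section FRset

variable {F : Set NatOp}

theorem mem_FRset (b : ℕ → ℕ) (n : ℕ) : b n ∈ FRset F b :=
  ⟨NatOp.id, OrderlyTerm.id, [n], List.isChain_singleton _, rfl, rfl⟩

theorem FRset_comp_subset (b : ℕ → ℕ) {f : ℕ → ℕ} (hf : StrictMono f) :
    FRset F (b ∘ f) ⊆ FRset F b := by
  rintro z ⟨t, ht, l, hl, hlen, rfl⟩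
  exact ⟨t, ht, l.map f, List.isChain_map_of_isChain f (fun _ _ h => hf h) hl, by simp [hlen],
    by rw [List.map_map]⟩

theorem FRset_tail_antitone (b : ℕ → ℕ) {n m : ℕ} (h : n ≤ m) :
    FRset F (fun i => b (i + m)) ⊆ FRset F (fun i => b (i + n)) := by
  have hshift : (fun i => b (i + m)) = (fun i => b (i + n)) ∘ (· + (m - n)) := by
    funext i
    simp only [Function.comp_apply]
    congr 1
    omega
  rw [hshift]
  exact FRset_comp_subset _ fun _ _ h => by simpa using h

theorem isUltraOn_of_forall_tail_subset {𝒜 : Set (Set ℕ)} (h𝒜 : IsFieldOfSets 𝒜) (b : ℕ → ℕ)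
    (hb : ∀ X ∈ 𝒜, ∃ k, FRset F (fun i => b (i + k)) ⊆ X ∨ FRset F (fun i => b (i + k)) ⊆ Xᶜ) :
    IsUltraOn 𝒜 {X ∈ 𝒜 | ∃ n, FRset F (fun i => b (i + n)) ⊆ X} := by
  obtain ⟨⟨X₀, hX₀⟩, hunion, hinter, hcompl⟩ := h𝒜
  refine ⟨fun X hX => hX.1, ?_, ?_, ?_, fun X hX => ?_⟩
  · rintro X ⟨hX, n, hn⟩ Y ⟨hY, m, hm⟩
    exact ⟨hinter X hX Y hY, max n m,
      Set.subset_inter ((FRset_tail_antitone b (le_max_left n m)).trans hn)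
        ((FRset_tail_antitone b (le_max_right n m)).trans hm)⟩
  · have huniv := hunion X₀ hX₀ X₀ᶜ (hcompl X₀ hX₀)
    rw [Set.union_compl_self] at huniv
    exact ⟨huniv, 0, Set.subset_univ _⟩
  · rintro ⟨-, n, hn⟩
    exact hn (mem_FRset _ 0)
  · obtain ⟨k, hk | hk⟩ := hb X hX
    · exact Or.inl ⟨hX, k, hk⟩
    · exact Or.inr ⟨hcompl X hX, k, hk⟩

end FRset

/-- The data `(ops, idx)` witnessing a reduction in `IsReduction`, detached from the sequences. -/
structure ReductionScheme (F : Set NatOp) where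
  ops : ℕ → NatOp
  idx : ℕ → List ℕ
  orderlyTerm_ops : ∀ n, OrderlyTerm F (ops n)
  length_idx : ∀ n, (idx n).length = (ops n).1
  chain_idx : ∀ n, (idx n).IsChain (· < ·)
  lt_of_mem_idx : ∀ n m : ℕ, n < m → ∀ x ∈ idx n, ∀ y ∈ idx m, x < y

namespace ReductionScheme

variable {F : Set NatOp}

def apply (r : ReductionScheme F) (a : ℕ → ℕ) : ℕ → ℕ :=
  fun n => (r.ops n).2 ((r.idx n).map a)

/-- The indices of `a` from which the terms `r.apply a i`, `i ∈ l`, are computed. -/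
def blocks (r : ReductionScheme F) (l : List ℕ) : List ℕ := (l.map r.idx).flatten

/-- Evaluates `t` at the terms `r.apply a i`, `i ∈ l`, directly from `(r.blocks l).map a`. -/
def termOn (r : ReductionScheme F) (t : NatOp) (l : List ℕ) : NatOp :=
  (((l.map r.ops).map Prod.fst).sum, fun x => t.2 (applyOps (l.map r.ops) x))

variable (r : ReductionScheme F)

theorem orderlyTerm_termOn {t : NatOp} (ht : OrderlyTerm F t) {l : List ℕ}
    (hl : l.length = t.1) : OrderlyTerm F (r.termOn t l) :=
  OrderlyTerm.comp _ ht (by simpa using fun i _ => r.orderlyTerm_ops i) (by simp [hl])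

theorem length_blocks (t : NatOp) (l : List ℕ) : (r.blocks l).length = (r.termOn t l).1 := by
  simp only [blocks, termOn, List.length_flatten, List.map_map]
  exact congrArg List.sum (List.map_congr_left fun i _ => r.length_idx i)

theorem chain_blocks {l : List ℕ} (hl : l.IsChain (· < ·)) : (r.blocks l).IsChain (· < ·) := by
  simp only [blocks, List.isChain_iff_pairwise, List.pairwise_flatten,
    List.pairwise_map, List.mem_map] at hl ⊢
  refine ⟨?_, hl.imp_of_mem fun _ _ hij x hx y hy => r.lt_of_mem_idx _ _ hij x hx y hy⟩
  rintro _ ⟨i, -, rfl⟩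
  exact List.isChain_iff_pairwise.1 (r.chain_idx i)

theorem lt_of_mem_blocks {l l' : List ℕ} (h : ∀ i ∈ l, ∀ j ∈ l', i < j) :
    ∀ x ∈ r.blocks l, ∀ y ∈ r.blocks l', x < y := by
  simp only [blocks, List.mem_flatten, List.mem_map]
  rintro x ⟨_, ⟨i, hi, rfl⟩, hx⟩ y ⟨_, ⟨j, hj, rfl⟩, hy⟩
  exact r.lt_of_mem_idx i j (h i hi j hj) x hx y hy

theorem applyOps_blocks (a : ℕ → ℕ) :
    ∀ l : List ℕ, applyOps (l.map r.ops) ((r.blocks l).map a) = l.map (r.apply a)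
  | [] => rfl
  | n :: l => by
    have hlen : ((r.idx n).map a).length = (r.ops n).1 := by simp [r.length_idx n]
    simp only [blocks, List.map_cons, List.flatten_cons, List.map_append, applyOps,
      List.take_left' hlen, List.drop_left' hlen]
    exact congrArg _ (applyOps_blocks a l)

theorem termOn_blocks (t : NatOp) (l : List ℕ) (a : ℕ → ℕ) :
    (r.termOn t l).2 ((r.blocks l).map a) = t.2 (l.map (r.apply a)) :=
  congrArg t.2 (r.applyOps_blocks a l)

theorem FRset_apply_subset (a : ℕ → ℕ) : FRset F (r.apply a) ⊆ FRset F a := by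
  rintro z ⟨t, ht, l, hl, hlen, rfl⟩
  exact ⟨r.termOn t l, r.orderlyTerm_termOn ht hlen, r.blocks l, r.chain_blocks hl,
    r.length_blocks t l, r.termOn_blocks t l a⟩

/-- First reduce by `r`, then by `s` (see `trans_apply`). -/
def trans (s : ReductionScheme F) : ReductionScheme F where
  ops n := r.termOn (s.ops n) (s.idx n)
  idx n := r.blocks (s.idx n)
  orderlyTerm_ops n := r.orderlyTerm_termOn (s.orderlyTerm_ops n) (s.length_idx n)
  length_idx _ := r.length_blocks _ _
  chain_idx n := r.chain_blocks (s.chain_idx n)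
  lt_of_mem_idx n m h := r.lt_of_mem_blocks (s.lt_of_mem_idx n m h)

theorem trans_apply (s : ReductionScheme F) (a : ℕ → ℕ) :
    (r.trans s).apply a = s.apply (r.apply a) :=
  funext fun n => r.termOn_blocks (s.ops n) (s.idx n) a

def refl : ReductionScheme F where
  ops _ := NatOp.id
  idx n := [n]
  orderlyTerm_ops _ := OrderlyTerm.id
  length_idx _ := rfl
  chain_idx _ := List.isChain_singleton _
  lt_of_mem_idx n m h x hx y hy := by
    simp only [List.mem_singleton] at hx hy
    omega

/-- Keeps the first `k` terms and reduces the tail `fun i => a (i + k)` by `r`. -/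
def keepPrefix (k : ℕ) : ReductionScheme F where
  ops n := if n < k then NatOp.id else r.ops (n - k)
  idx n := if n < k then [n] else (r.idx (n - k)).map (· + k)
  orderlyTerm_ops n := by
    split_ifs
    exacts [OrderlyTerm.id, r.orderlyTerm_ops _]
  length_idx _ := by
    split_ifs <;> simp [r.length_idx, NatOp.id]
  chain_idx n := by
    split_ifs
    · exact List.isChain_singleton _
    · exact List.isChain_map_of_isChain _ (fun _ _ h => by omega) (r.chain_idx _)
  lt_of_mem_idx n m hnm x hx y hy := by
    split_ifs at hx hy with hn hm hm <;> simp only [List.mem_singleton, List.mem_map] at hx hy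
    · omega
    · obtain ⟨y, -, rfl⟩ := hy
      omega
    · omega
    · obtain ⟨x, hx, rfl⟩ := hx
      obtain ⟨y, hy, rfl⟩ := hy
      have := r.lt_of_mem_idx (n - k) (m - k) (by omega) x hx y hy
      omega

theorem keepPrefix_apply_of_lt {k n : ℕ} (a : ℕ → ℕ) (h : n < k) :
    (r.keepPrefix k).apply a n = a n := by
  simp [apply, keepPrefix, h, NatOp.id]

theorem keepPrefix_apply_of_le {k n : ℕ} (a : ℕ → ℕ) (h : k ≤ n) :
    (r.keepPrefix k).apply a n = r.apply (fun i => a (i + k)) (n - k) := by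
  simp only [apply, keepPrefix, Nat.not_lt.2 h, if_false, List.map_map]
  rfl

theorem keepPrefix_apply_tail (j k : ℕ) (a : ℕ → ℕ) :
    (fun i => (r.keepPrefix (j + k)).apply a (i + k)) =
      (r.keepPrefix j).apply (fun i => a (i + k)) := by
  funext i
  rcases Nat.lt_or_ge i j with h | h
  · rw [keepPrefix_apply_of_lt _ _ (by omega), keepPrefix_apply_of_lt _ _ h]
  · rw [keepPrefix_apply_of_le _ _ (by omega), keepPrefix_apply_of_le _ _ h]
    simp only [Nat.add_sub_add_right, Nat.add_assoc]

def FixesBelow (k : ℕ) : Prop := ∀ n < k, r.ops n = NatOp.id ∧ r.idx n = [n]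

theorem fixesBelow_keepPrefix (k : ℕ) : (r.keepPrefix k).FixesBelow k := by
  intro n hn
  simp [keepPrefix, hn]

variable {r}

theorem FixesBelow.mono {j k : ℕ} (h : r.FixesBelow k) (hjk : j ≤ k) : r.FixesBelow j :=
  fun n hn => h n (by omega)

theorem FixesBelow.apply_eq {k n : ℕ} (h : r.FixesBelow k) (hn : n < k) (a : ℕ → ℕ) :
    r.apply a n = a n := by
  simp [apply, (h n hn).1, (h n hn).2, NatOp.id]

theorem FixesBelow.trans_idx {k n : ℕ} (h : r.FixesBelow k) (hn : n < k)
    (s : ReductionScheme F) : (s.trans r).idx n = s.idx n := by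
  simp [trans, blocks, (h n hn).2]

end ReductionScheme

theorem IsReduction.exists_apply_eq {F : Set NatOp} {b a : ℕ → ℕ} (h : IsReduction F b a) :
    ∃ r : ReductionScheme F, r.apply a = b := by
  obtain ⟨ops, idx, hops, hlen, hchain, hlt, hb⟩ := h
  exact ⟨⟨ops, idx, hops, hlen, hchain, hlt⟩, (funext hb).symm⟩

theorem IsReduction.FRset_subset {F : Set NatOp} {b a : ℕ → ℕ} (h : IsReduction F b a) :
    FRset F b ⊆ FRset F a := by
  obtain ⟨r, rfl⟩ := h.exists_apply_eq
  exact r.FRset_apply_subset a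

section Diagonal

open ReductionScheme

variable {F : Set NatOp} {s : ℕ → ℕ → ℕ} {q : ℕ → ReductionScheme F}

def compUpTo (q : ℕ → ReductionScheme F) : ℕ → ReductionScheme F
  | 0 => refl
  | j + 1 => (compUpTo q j).trans (q j)

theorem compUpTo_apply (hs : ∀ j, s (j + 1) = (q j).apply (s j)) :
    ∀ j, (compUpTo q j).apply (s 0) = s j
  | 0 => rfl
  | j + 1 => by rw [compUpTo, trans_apply, compUpTo_apply hs j, hs]

theorem compUpTo_idx (hq : ∀ j, (q j).FixesBelow j) {n : ℕ} :
    ∀ j, n < j → (compUpTo q j).idx n = (compUpTo q (n + 1)).idx n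
  | 0, h => absurd h (Nat.not_lt_zero n)
  | j + 1, h => by
    rcases Nat.lt_or_ge n j with hnj | hnj
    · rw [compUpTo, (hq j).trans_idx hnj, compUpTo_idx hq j hnj]
    · rw [show j = n by omega]

theorem eq_diag_of_lt (hq : ∀ j, (q j).FixesBelow j) (hs : ∀ j, s (j + 1) = (q j).apply (s j))
    {n : ℕ} : ∀ j, n < j → s j n = s (n + 1) n
  | 0, h => absurd h (Nat.not_lt_zero n)
  | j + 1, h => by
    rcases Nat.lt_or_ge n j with hnj | hnj
    · rw [hs, (hq j).apply_eq hnj, eq_diag_of_lt hq hs j hnj]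
    · rw [show j = n by omega]

theorem isReduction_diag_zero (hq : ∀ j, (q j).FixesBelow j)
    (hs : ∀ j, s (j + 1) = (q j).apply (s j)) : IsReduction F (fun n => s (n + 1) n) (s 0) := by
  refine ⟨fun n => (compUpTo q (n + 1)).ops n, fun n => (compUpTo q (n + 1)).idx n,
    fun n => (compUpTo q (n + 1)).orderlyTerm_ops n, fun n => (compUpTo q (n + 1)).length_idx n,
    fun n => (compUpTo q (n + 1)).chain_idx n, fun n m hnm x hx y hy => ?_,
    fun n => congrFun (compUpTo_apply hs (n + 1)).symm n⟩
  change x ∈ (compUpTo q (n + 1)).idx n at hx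
  rw [← compUpTo_idx hq (m + 1) (by omega)] at hx
  exact (compUpTo q (m + 1)).lt_of_mem_idx n m hnm x hx y hy

theorem isReduction_diag (hq : ∀ j, (q j).FixesBelow j)
    (hs : ∀ j, s (j + 1) = (q j).apply (s j)) (m : ℕ) :
    IsReduction F (fun n => s (n + 1) n) (s m) := by
  have hdiag : (fun n => s (n + 1) n) = fun n => s (n + 1 + m) n :=
    funext fun n => (eq_diag_of_lt hq hs (n + 1 + m) (by omega)).symm
  have h := isReduction_diag_zero (s := fun j => s (j + m)) (q := fun j => q (j + m))
    (fun j => (hq (j + m)).mono (by omega)) (fun j => by rw [Nat.add_right_comm, hs])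
  rw [hdiag]
  simpa only [Nat.zero_add] using h

end Diagonal

section Construction

open ReductionScheme

variable {F : Set NatOp}

theorem IsRamseyAlg.exists_scheme (hF : IsRamseyAlg F) (a : ℕ → ℕ) (X : Set ℕ) :
    ∃ r : ReductionScheme F, FRset F (r.apply a) ⊆ X ∨ FRset F (r.apply a) ⊆ Xᶜ := by
  obtain ⟨b, hb, hX⟩ := hF a X
  obtain ⟨r, rfl⟩ := hb.exists_apply_eq
  exact ⟨r, hX.imp_right Set.subset_compl_iff_disjoint_right.2⟩

theorem IsRamseyAlg.exists_deciding_chain (hF : IsRamseyAlg F) (X : ℕ → Set ℕ) (a : ℕ → ℕ) :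
    ∃ (s : ℕ → ℕ → ℕ) (p : ℕ → ReductionScheme F), s 0 = a ∧
      (∀ k, s (k + 1) = ((p k).keepPrefix k).apply (s k)) ∧
      ∀ k, FRset F ((p k).apply fun i => s k (i + k)) ⊆ X k ∨
        FRset F ((p k).apply fun i => s k (i + k)) ⊆ (X k)ᶜ := by
  choose pick hpick using hF.exists_scheme
  let s : ℕ → ℕ → ℕ := fun k =>
    Nat.rec a (fun k sk => ((pick (fun i => sk (i + k)) (X k)).keepPrefix k).apply sk) k
  exact ⟨s, fun k => pick (fun i => s k (i + k)) (X k), rfl, fun _ => rfl,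
    fun k => hpick _ _⟩

theorem isReduction_tail_diag {s : ℕ → ℕ → ℕ} {p : ℕ → ReductionScheme F}
    (hs : ∀ k, s (k + 1) = ((p k).keepPrefix k).apply (s k)) (k : ℕ) :
    IsReduction F (fun i => s (i + k + 1) (i + k)) ((p k).apply fun i => s k (i + k)) := by
  set t : ℕ → ℕ → ℕ := fun j i => s (j + k) (i + k) with ht
  have hstep : ∀ j, t (j + 1) = ((p (j + k)).keepPrefix j).apply (t j) := fun j => by
    simp only [ht, Nat.add_right_comm j 1 k, hs, keepPrefix_apply_tail]
  have hdiag : (fun i => s (i + k + 1) (i + k)) = fun n => t (n + 1) n := by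
    simp only [ht, Nat.add_right_comm _ 1 k]
  have hone : t 1 = (p k).apply fun i => s k (i + k) := by
    funext i
    rw [hstep 0, keepPrefix_apply_of_le _ _ (Nat.zero_le i)]
    simp [ht]
  rw [hdiag, ← hone]
  exact isReduction_diag (fun j => (p (j + k)).fixesBelow_keepPrefix j) hstep 1

end Construction

theorem stmt16_general (F : Set NatOp) (hF : IsRamseyAlg F)
    (𝒜 : Set (Set ℕ)) (h𝒜 : IsFieldOfSets 𝒜) (hcount : 𝒜.Countable)
    (a : ℕ → ℕ) :
    ∃ b : ℕ → ℕ, IsReduction F b a ∧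
      IsUltraOn 𝒜 {X ∈ 𝒜 | ∃ n : ℕ, FRset F (fun i => b (i + n)) ⊆ X} := by
  obtain ⟨X, rfl⟩ := hcount.exists_eq_range h𝒜.1
  obtain ⟨s, p, rfl, hs, hp⟩ := hF.exists_deciding_chain X a
  refine ⟨fun n => s (n + 1) n,
    isReduction_diag (fun k => (p k).fixesBelow_keepPrefix k) hs 0,
    isUltraOn_of_forall_tail_subset (F := F) h𝒜 (fun n => s (n + 1) n) ?_⟩
  rintro _ ⟨k, rfl⟩
  have htail := (isReduction_tail_diag hs k).FRset_subset
  exact ⟨k, (hp k).imp htail.trans htail.trans⟩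

theorem stmt16 (F : Set NatOp) (hF : IsRamseyAlg F)
    (𝒜 : Set (Set ℕ)) (h𝒜 : IsFieldOfSets 𝒜) (hcount : 𝒜.Countable)
    (hsing : ∀ x : ℕ, {x} ∈ 𝒜) (a : ℕ → ℕ) :
    ∃ b : ℕ → ℕ, IsReduction F b a ∧
      IsUltraOn 𝒜 {X ∈ 𝒜 | ∃ n : ℕ, FRset F (fun i => b (i + n)) ⊆ X} :=
  stmt16_general F hF 𝒜 h𝒜 hcount a
end
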